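/- Let Σ be a linearly ordered alphabet and let D = {d₀ < d₁ < ⋯ < d_{m-1}} be a finite prefix-free set of nonempty strings indexed in lexicographic order. Define the map φ sending an infinite sequence of the form d_{i₁}·d_{i₂}·⋯ (infinite concatenation of elements of D) to the infinite sequence of indices (i₁, i₂, …) ∈ ℕ → Fin m. Then φ is well-defined (the index sequence is unique) and strictly order-preserving: concatenation x is lexicographically less than concatenation y iff φ(x) is lexicographically less than φ(y). -/

import Mathlib

/-!
Uniqueness of the index sequence is proved block by block: once the first `n` blocks of two
factorizations agree, their `(n+1)`-st blocks are both prefixes of the same tail, hence one is a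
prefix of the other, which prefix-freeness only allows for equal indices.

For monotonicity, if `p` and `q` first differ at block `k` with `p k < q k`, then `x` and `y`
share the first `k` blocks and continue with `d (p k)` and `d (q k)`. These words are
lexicographically ordered and neither is a prefix of the other, so they differ at some letter,
where `x < y`. Since `SeqLexLt` is the strict order of `Lex (ℕ → _)`, a linear order, the converse
follows from trichotomy, as equal index sequences produce equal concatenations.
-/

/-- `l` is a prefix of the infinite sequence `x`. -/
def SeqIsPrefix {σ : Type*} (l : List σ) (x : ℕ → σ) : Prop :=
  ∀ i, (h : i < l.length) → x i = l.get ⟨i, h⟩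

/-- `x` is the infinite concatenation `a 0 ++ a 1 ++ ⋯`. -/
def IsConcat {σ : Type*} (x : ℕ → σ) (a : ℕ → List σ) : Prop :=
  ∀ n, SeqIsPrefix (((List.range n).map a).flatten) x

/-- Lexicographic order on infinite sequences over an ordered type. -/
def SeqLexLt {τ : Type*} [LT τ] (x y : ℕ → τ) : Prop :=
  ∃ k, (∀ i < k, x i = y i) ∧ x k < y k

theorem seqLexLt_iff_toLex_lt {τ : Type*} [LT τ] {x y : ℕ → τ} :
    SeqLexLt x y ↔ toLex x < toLex y :=
  Iff.rfl

namespace SeqIsPrefix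

variable {σ : Type*} {l l' : List σ} {x : ℕ → σ}

theorem cons_iff {a : σ} : SeqIsPrefix (a :: l) x ↔ x 0 = a ∧ SeqIsPrefix l (fun i => x (i + 1)) :=
  ⟨fun h => ⟨h 0 (by simp), fun i hi => h (i + 1) (by simpa using hi)⟩,
    fun ⟨h0, h⟩ i hi => by
      cases i with
      | zero => exact h0
      | succ i => exact h i (by simpa using hi)⟩

theorem prefix_of_length_le (h : SeqIsPrefix l x) (h' : SeqIsPrefix l' x)
    (hlen : l.length ≤ l'.length) : l <+: l' := by
  rw [List.prefix_iff_eq_take]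
  refine List.ext_getElem (by simp [hlen]) fun i hi hi' => ?_
  rw [List.getElem_take]
  exact (h i hi).symm.trans (h' i (hi.trans_le hlen))

theorem prefix_or_prefix (h : SeqIsPrefix l x) (h' : SeqIsPrefix l' x) : l <+: l' ∨ l' <+: l :=
  (le_total l.length l'.length).imp (h.prefix_of_length_le h') (h'.prefix_of_length_le h)

theorem seqLexLt [LT σ] {u v : List σ} (huv : List.Lex (· < ·) u v) (hnp : ¬ u <+: v)
    {x y : ℕ → σ} (hx : SeqIsPrefix u x) (hy : SeqIsPrefix v y) : SeqLexLt x y := by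
  induction huv generalizing x y with
  | nil => exact absurd List.nil_prefix hnp
  | @cons a _ _ _ ih =>
    rw [cons_iff] at hx hy
    obtain ⟨k, hagree, hlt⟩ :=
      ih (fun hp => hnp (List.cons_prefix_cons.2 ⟨rfl, hp⟩)) hx.2 hy.2
    refine ⟨k + 1, fun i hi => ?_, hlt⟩
    cases i with
    | zero => exact hx.1.trans hy.1.symm
    | succ i => exact hagree i (by omega)
  | rel hab =>
    rw [cons_iff] at hx hy
    exact ⟨0, by simp, hx.1 ▸ hy.1 ▸ hab⟩

end SeqIsPrefix

theorem le_length_flatten_map_range {σ : Type*} {a : ℕ → List σ} (hne : ∀ t, a t ≠ [])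
    (n : ℕ) : n ≤ ((List.range n).map a).flatten.length := by
  induction n with
  | zero => simp
  | succ n ih =>
    have := List.length_pos_iff.2 (hne n)
    simp only [List.range_succ, List.map_append, List.flatten_append, List.length_append,
      List.map_cons, List.map_nil, List.flatten_cons, List.flatten_nil, List.append_nil]
    omega

namespace IsConcat

variable {σ : Type*} {x y : ℕ → σ}

theorem seqIsPrefix_append {a : ℕ → List σ} (h : IsConcat x a) (n : ℕ) :
    SeqIsPrefix (((List.range n).map a).flatten ++ a n) x := by
  simpa [List.range_succ] using h (n + 1)

theorem eq_of_ne_nil {a : ℕ → List σ} (hne : ∀ t, a t ≠ []) (hx : IsConcat x a)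
    (hy : IsConcat y a) : x = y := by
  funext i
  have hi : i < ((List.range (i + 1)).map a).flatten.length :=
    le_length_flatten_map_range hne (i + 1)
  rw [hx (i + 1) i hi, hy (i + 1) i hi]

variable {ι : Type*} {d : ι → List σ}

theorem index_unique (hpf : ∀ i j, i ≠ j → ¬ d i <+: d j) {p p' : ℕ → ι}
    (hp : IsConcat x (fun t => d (p t))) (hp' : IsConcat x (fun t => d (p' t))) : p = p' := by
  funext n
  induction n using Nat.strong_induction_on with
  | _ n ih =>
    have hblocks : ((List.range n).map (fun t => d (p t))).flatten =
        ((List.range n).map (fun t => d (p' t))).flatten :=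
      congrArg _ (List.map_congr_left fun t ht => by rw [ih t (List.mem_range.1 ht)])
    have h := hp.seqIsPrefix_append n
    rw [hblocks] at h
    by_contra hne
    rcases h.prefix_or_prefix (hp'.seqIsPrefix_append n) with h | h <;>
      rw [List.prefix_append_right_inj] at h
    · exact hpf _ _ hne h
    · exact hpf _ _ (Ne.symm hne) h

theorem seqLexLt [Preorder ι] [LT σ]
    (hsorted : ∀ i j : ι, i < j → List.Lex (· < ·) (d i) (d j))
    (hpf : ∀ i j, i ≠ j → ¬ d i <+: d j) {p q : ℕ → ι}
    (hp : IsConcat x (fun t => d (p t))) (hq : IsConcat y (fun t => d (q t)))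
    (hpq : SeqLexLt p q) : SeqLexLt x y := by
  obtain ⟨k, hagree, hlt⟩ := hpq
  have hblocks : ((List.range k).map (fun t => d (p t))).flatten =
      ((List.range k).map (fun t => d (q t))).flatten :=
    congrArg _ (List.map_congr_left fun t ht => by rw [hagree t (List.mem_range.1 ht)])
  have hx := hp.seqIsPrefix_append k
  rw [hblocks] at hx
  refine hx.seqLexLt (List.Lex.append_left _ (hsorted _ _ hlt) _) ?_ (hq.seqIsPrefix_append k)
  rw [List.prefix_append_right_inj]
  exact hpf _ _ hlt.ne

end IsConcat

/-- for a finite prefix-free dictionary `d 0 < d 1 < ⋯ < d (m-1)`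
listed in lexicographic order, the map `φ` from infinite concatenations of
dictionary elements to their index sequences is well defined (index sequences
are unique), and strictly order-preserving: the concatenations compare
lexicographically as `ℕ → Σ` exactly as the index sequences compare
lexicographically as `ℕ → Fin m`. -/
theorem stmt_14 {σ : Type*} [LinearOrder σ] (m : ℕ) (d : Fin m → List σ)
    (hne : ∀ i, d i ≠ [])
    (hsorted : ∀ i j : Fin m, i < j → List.Lex (· < ·) (d i) (d j))
    (hpf : ∀ i j : Fin m, i ≠ j → ¬ d i <+: d j)
    (x y : ℕ → σ) (p p' q : ℕ → Fin m)
    (hxp : IsConcat x (fun t => d (p t)))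
    (hxp' : IsConcat x (fun t => d (p' t)))
    (hyq : IsConcat y (fun t => d (q t))) :
    p = p' ∧ (SeqLexLt x y ↔ SeqLexLt p q) := by
  refine ⟨hxp.index_unique hpf hxp', fun hxy => ?_, hxp.seqLexLt hsorted hpf hyq⟩
  rcases lt_trichotomy (toLex p) (toLex q) with hpq | hpq | hqp
  · exact hpq
  · obtain rfl : p = q := toLex.injective hpq
    obtain rfl : x = y := hxp.eq_of_ne_nil (fun t => hne (p t)) hyq
    exact absurd (seqLexLt_iff_toLex_lt.1 hxy) (lt_irrefl _)
  · have hyx := hyq.seqLexLt hsorted hpf hxp hqp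
    exact absurd (seqLexLt_iff_toLex_lt.1 hyx) (lt_asymm hxy)
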